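/- Let K be an algebraically closed field that is complete with respect to a nontrivial nonarchimedean multiplicative norm. Let f ∈ K[X] be a monic polynomial of degree d ≥ 2, with filled Julia set 𝒦_f = {x ∈ K : the orbit (f^[n](x))_{n≥0} is bounded in norm}. Suppose r > 0 is the radius of a minimal closed ball containing 𝒦_f, i.e., 𝒦_f ⊆ B̄(z₀, r) for some z₀ ∈ K and every closed ball containing 𝒦_f has radius ≥ r. Then for any point x₀ ∈ 𝒦_f, the filled Julia set is contained in the union of the closed balls of radius r^{−1/d} centered at the roots of f(f(X)) − x₀: 𝒦_f ⊆ ⋃_{x : f(f(x)) = x₀} B̄(x, r^{−1/d}). -/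

import Mathlib

open Polynomial

/-- The orbit of `x` under evaluation of the polynomial `f` is bounded in norm. -/
def BoundedOrbit {K : Type*} [NormedField K] (f : K[X]) (x : K) : Prop :=
  ∃ C : ℝ, ∀ n : ℕ, ‖(fun y => f.eval y)^[n] x‖ ≤ C

/-!
The filled Julia set `𝒦` is totally invariant and, lying in a ball of radius `r`, has diameter
at most `r`. If `r ≤ 1`, every root of `f(f(X)) - x₀` lies in `𝒦`, hence within `r ≤ r^(-1/d)`
of any `x ∈ 𝒦`. If `r > 1`, put `ρ = r^(1/d)`, so `1 < ρ < r`. Since `|f(f(x)) - x₀| ≤ r`,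
some root `a` of `f - x₀` has `|f(x) - a| ≤ ρ`, and likewise `𝒦` is covered by the balls of
radius `ρ` about the roots of `f - a`. By minimality of `r` these roots cannot all lie within
distance `< r` of `x`, so one of them is at distance `≥ r`. Writing `|f(x) - a|` as the product
of the distances from `x` to the roots of `f - a` then gives `r · m^(d-1) ≤ ρ` for the distance
`m` from `x` to the nearest one, i.e. `m ≤ ρ⁻¹ = r^(-1/d)`.
-/

namespace BoundedOrbit

variable {K : Type*} [NormedField K] {f : K[X]} {x : K}

theorem eval (h : BoundedOrbit f x) : BoundedOrbit f (f.eval x) := by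
  obtain ⟨C, hC⟩ := h
  exact ⟨C, fun n => by simpa only [Function.iterate_succ_apply] using hC (n + 1)⟩

theorem of_eval (h : BoundedOrbit f (f.eval x)) : BoundedOrbit f x := by
  obtain ⟨C, hC⟩ := h
  refine ⟨max C ‖x‖, fun n => ?_⟩
  cases n with
  | zero => exact le_max_right _ _
  | succ n => exact (Function.iterate_succ_apply _ n x ▸ hC n).trans (le_max_left _ _)

end BoundedOrbit

namespace IsUltrametricDist

variable {X : Type*} [PseudoMetricSpace X] [IsUltrametricDist X]

theorem dist_le_of_mem_closedBall {z x y : X} {r : ℝ} (hx : x ∈ Metric.closedBall z r)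
    (hy : y ∈ Metric.closedBall z r) : dist x y ≤ r :=
  (dist_triangle_max x z y).trans (max_le hx (by rwa [dist_comm]))

theorem exists_le_dist_of_subset_iUnion_closedBall {S T : Set X} (hT : T.Finite) {ρ r : ℝ}
    (hρr : ρ < r) (hS : S ⊆ ⋃ b ∈ T, Metric.closedBall b ρ) {x : X}
    (hmin : ∀ s, S ⊆ Metric.closedBall x s → r ≤ s) : ∃ b ∈ T, r ≤ dist x b := by
  by_contra! hnear
  set D := insert ρ (dist x '' T)
  have hD : D.Finite := (hT.image _).insert ρ
  have hDr : sSup D < r := by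
    refine (hD.csSup_lt_iff (Set.insert_nonempty _ _)).2 ?_
    rintro t (rfl | ⟨b, hb, rfl⟩)
    exacts [hρr, hnear b hb]
  refine (hmin (sSup D) fun z hz => ?_).not_gt hDr
  obtain ⟨b, hb, hzb⟩ := Set.mem_iUnion₂.1 (hS hz)
  calc dist z x ≤ max (dist z b) (dist x b) := dist_comm x b ▸ dist_triangle_max z b x
    _ ≤ sSup D := max_le (hzb.trans (le_csSup hD.bddAbove (Set.mem_insert _ _)))
        (le_csSup hD.bddAbove (Set.mem_insert_of_mem _ (Set.mem_image_of_mem _ hb)))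

end IsUltrametricDist

namespace Polynomial.Monic

variable {K : Type*} [NormedField K] [IsAlgClosed K] {p : K[X]}

theorem norm_eval_eq_prod_roots (hp : p.Monic) (x : K) :
    ‖p.eval x‖ = (p.roots.map fun b => ‖x - b‖).prod := by
  rw [(IsAlgClosed.splits p).eval_eq_prod_roots_of_monic hp,
    ← normHom_apply, map_multiset_prod, Multiset.map_map]
  rfl

theorem exists_mem_roots_forall_mul_pow_le (hp : p.Monic) (hdeg : p.natDegree ≠ 0) (x : K) :
    ∃ b ∈ p.roots, ∀ c ∈ p.roots, ‖x - c‖ * ‖x - b‖ ^ (p.natDegree - 1) ≤ ‖p.eval x‖ := by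
  classical
  have hcard : Multiset.card p.roots = p.natDegree :=
    (IsAlgClosed.splits p).natDegree_eq_card_roots.symm
  have hne : p.roots.toFinset.Nonempty := by
    rw [Multiset.toFinset_nonempty, ← Multiset.card_pos, hcard]
    exact Nat.pos_of_ne_zero hdeg
  obtain ⟨b, hb, hbmin⟩ := p.roots.toFinset.exists_min_image (fun c => ‖x - c‖) hne
  rw [Multiset.mem_toFinset] at hb
  refine ⟨b, hb, fun c hc => ?_⟩
  rw [norm_eval_eq_prod_roots hp, ← Multiset.cons_erase hc, Multiset.map_cons,
    Multiset.prod_cons]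
  refine mul_le_mul_of_nonneg_left ?_ (norm_nonneg _)
  have hcard' : Multiset.card (p.roots.erase c) = p.natDegree - 1 := by
    rw [Multiset.card_erase_of_mem hc, hcard, Nat.pred_eq_sub_one]
  calc ‖x - b‖ ^ (p.natDegree - 1) = ((p.roots.erase c).map fun _ => ‖x - b‖).prod := by
        rw [Multiset.map_const', Multiset.prod_replicate, hcard']
    _ ≤ ((p.roots.erase c).map fun c' => ‖x - c'‖).prod :=
        Multiset.prod_map_le_prod_map₀ _ _ (fun _ _ => norm_nonneg _) fun c' hc' =>
          hbmin c' (Multiset.mem_toFinset.2 (Multiset.mem_of_mem_erase hc'))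

theorem exists_eval_eq_forall_mul_pow_le {f : K[X]} (hf : f.Monic) (hdeg : f.natDegree ≠ 0)
    (y a : K) : ∃ b, f.eval b = a ∧
      ∀ c, f.eval c = a → ‖y - c‖ * ‖y - b‖ ^ (f.natDegree - 1) ≤ ‖f.eval y - a‖ := by
  have hfa : (f - C a).Monic := hf.sub_of_left <|
    degree_C_le.trans_lt (natDegree_pos_iff_degree_pos.1 (Nat.pos_of_ne_zero hdeg))
  have hroots : ∀ b, b ∈ (f - C a).roots ↔ f.eval b = a := fun b => by
    rw [mem_roots hfa.ne_zero, IsRoot, eval_sub, eval_C, sub_eq_zero]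
  obtain ⟨b, hb, hbmin⟩ :=
    hfa.exists_mem_roots_forall_mul_pow_le (by rwa [natDegree_sub_C]) y
  refine ⟨b, (hroots b).1 hb, fun c hc => ?_⟩
  simpa only [natDegree_sub_C, eval_sub, eval_C] using hbmin c ((hroots c).2 hc)

end Polynomial.Monic

theorem Polynomial.finite_setOf_eval_eq {R : Type*} [CommRing R] [IsDomain R] {f : R[X]}
    (hdeg : f.natDegree ≠ 0) (a : R) : {b | f.eval b = a}.Finite := by
  have hfa : f - C a ≠ 0 := fun h => hdeg (by rw [← natDegree_sub_C (a := a), h, natDegree_zero])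
  simpa only [IsRoot, eval_sub, eval_C, sub_eq_zero] using finite_setOfPred_isRoot hfa

theorem le_inv_of_pow_mul_pow_sub_one_le {ρ m : ℝ} {d : ℕ} (hd : 2 ≤ d) (hρ : 0 < ρ)
    (hm : 0 ≤ m) (h : ρ ^ d * m ^ (d - 1) ≤ ρ) : m ≤ ρ⁻¹ := by
  have hpow : (ρ * m) ^ (d - 1) ≤ 1 := by
    refine le_of_mul_le_mul_left ?_ hρ
    rwa [mul_pow, ← mul_assoc, ← pow_succ', Nat.sub_add_cancel (by omega), mul_one]
  have hprod : ρ * m ≤ 1 := (pow_le_one_iff_of_nonneg (by positivity) (by omega)).1 hpow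
  rwa [← one_div, le_div_iff₀ hρ, mul_comm]

theorem exists_eval_eval_eq_dist_le_of_one_lt {K : Type*} [NormedField K] [IsAlgClosed K]
    [IsUltrametricDist K] {f : K[X]} {d : ℕ} (hd : 2 ≤ d) (hmonic : f.Monic)
    (hdeg : f.natDegree = d) {r : ℝ} (hr1 : 1 < r) {z₀ : K}
    (hcover : {x : K | BoundedOrbit f x} ⊆ Metric.closedBall z₀ r) {x x₀ : K}
    (hmin : ∀ s, {x : K | BoundedOrbit f x} ⊆ Metric.closedBall x s → r ≤ s)
    (hx : BoundedOrbit f x) (hx₀ : BoundedOrbit f x₀) :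
    ∃ b, f.eval (f.eval b) = x₀ ∧ dist x b ≤ r ^ (-(1 : ℝ) / d) := by
  have hd0 : f.natDegree ≠ 0 := by omega
  set ρ := r ^ ((d : ℝ)⁻¹)
  have hρ : 0 < ρ := by positivity
  have hρd : ρ ^ d = r := Real.rpow_inv_natCast_pow (by linarith) (by omega)
  have hρr : ρ < r :=
    Real.rpow_lt_self_of_one_lt hr1 (inv_lt_one_of_one_lt₀ (by exact_mod_cast hd))
  have hdiam {u v : K} (hu : BoundedOrbit f u) (hv : BoundedOrbit f v) : ‖u - v‖ ≤ r :=
    dist_eq_norm u v ▸ IsUltrametricDist.dist_le_of_mem_closedBall (hcover hu) (hcover hv)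
  have hnear (y a : K) (h : ‖f.eval y - a‖ ≤ r) : ∃ b, f.eval b = a ∧ ‖y - b‖ ≤ ρ := by
    obtain ⟨b, hb, hyb⟩ := hmonic.exists_eval_eq_forall_mul_pow_le hd0 y a
    refine ⟨b, hb, (pow_le_pow_iff_left₀ (norm_nonneg _) hρ.le (by omega : d ≠ 0)).1 ?_⟩
    calc ‖y - b‖ ^ d = ‖y - b‖ * ‖y - b‖ ^ (f.natDegree - 1) := by
          rw [← pow_succ', Nat.sub_add_cancel (by omega), hdeg]
      _ ≤ ρ ^ d := hρd ▸ (hyb b hb).trans h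
  obtain ⟨a, ha, hxa⟩ := hnear (f.eval x) x₀ (hdiam hx.eval.eval hx₀)
  have haK : BoundedOrbit f a := .of_eval (ha ▸ hx₀)
  have hcov : {z | BoundedOrbit f z} ⊆ ⋃ b ∈ {b | f.eval b = a}, Metric.closedBall b ρ :=
    fun z hz => by
      obtain ⟨b, hb, hzb⟩ := hnear z a (hdiam (BoundedOrbit.eval hz) haK)
      exact Set.mem_iUnion₂.2 ⟨b, hb, by rwa [Metric.mem_closedBall, dist_eq_norm]⟩
  obtain ⟨c, hc, hxc⟩ := IsUltrametricDist.exists_le_dist_of_subset_iUnion_closedBall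
    (finite_setOf_eval_eq hd0 a) hρr hcov hmin
  obtain ⟨b, hb, hbmin⟩ := hmonic.exists_eval_eq_forall_mul_pow_le hd0 x a
  rw [hdeg] at hbmin
  refine ⟨b, by rw [hb, ha], ?_⟩
  rw [neg_div, one_div, Real.rpow_neg (by linarith), dist_eq_norm]
  refine le_inv_of_pow_mul_pow_sub_one_le hd hρ (norm_nonneg _) ?_
  calc ρ ^ d * ‖x - b‖ ^ (d - 1) ≤ ‖x - c‖ * ‖x - b‖ ^ (d - 1) := by
        rw [hρd]; gcongr; exact dist_eq_norm x c ▸ hxc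
    _ ≤ ‖f.eval x - a‖ := hbmin c hc
    _ ≤ ρ := hxa

theorem filledJulia_subset_small_balls_general
    {K : Type*} [NontriviallyNormedField K] [IsAlgClosed K]
    [IsUltrametricDist K]
    (f : K[X]) (d : ℕ) (hd : 2 ≤ d) (hmonic : f.Monic) (hdeg : f.natDegree = d)
    (r : ℝ) (hr : 0 < r)
    (z₀ : K) (hcover : {x : K | BoundedOrbit f x} ⊆ Metric.closedBall z₀ r)
    (hmin : ∀ (z : K) (s : ℝ), {x : K | BoundedOrbit f x} ⊆ Metric.closedBall z s → r ≤ s)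
    (x₀ : K) (hx₀ : BoundedOrbit f x₀) :
    {x : K | BoundedOrbit f x} ⊆
      ⋃ x ∈ {x : K | f.eval (f.eval x) = x₀}, Metric.closedBall x (r ^ (-(1 : ℝ) / d)) := by
  intro x hx
  rw [Set.mem_iUnion₂]
  rcases le_or_gt r 1 with hr1 | hr1
  · have hd0 : f.natDegree ≠ 0 := by omega
    obtain ⟨a, ha, -⟩ := hmonic.exists_eval_eq_forall_mul_pow_le hd0 0 x₀
    obtain ⟨b, hb, -⟩ := hmonic.exists_eval_eq_forall_mul_pow_le hd0 0 a
    have hbK : BoundedOrbit f b := .of_eval (.of_eval (by rwa [hb, ha]))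
    refine ⟨b, (by rw [hb, ha] : f.eval (f.eval b) = x₀), ?_⟩
    calc dist x b ≤ r := IsUltrametricDist.dist_le_of_mem_closedBall (hcover hx) (hcover hbK)
      _ ≤ 1 := hr1
      _ ≤ r ^ (-(1 : ℝ) / d) :=
        Real.one_le_rpow_of_pos_of_le_one_of_nonpos hr hr1 (by rw [neg_div, neg_nonpos]; positivity)
  · obtain ⟨b, hb, hxb⟩ :=
      exists_eval_eval_eq_dist_le_of_one_lt hd hmonic hdeg hr1 hcover (hmin x) hx hx₀
    exact ⟨b, hb, hxb⟩

/-- Benedetto's lemma, second containment: over an algebraically closed, complete,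
nonarchimedean nontrivially normed field, if `r` is the radius of a minimal closed ball
containing the filled Julia set of a monic polynomial `f` of degree `d ≥ 2`, then for any
`x₀` in the filled Julia set, the filled Julia set is contained in the union of the closed
balls of radius `r^(-1/d)` about the roots of `f(f(X)) - x₀`. -/
theorem filledJulia_subset_small_balls
    {K : Type*} [NontriviallyNormedField K] [IsAlgClosed K] [CompleteSpace K]
    [IsUltrametricDist K]
    (f : K[X]) (d : ℕ) (hd : 2 ≤ d) (hmonic : f.Monic) (hdeg : f.natDegree = d)
    (r : ℝ) (hr : 0 < r)
    (z₀ : K) (hcover : {x : K | BoundedOrbit f x} ⊆ Metric.closedBall z₀ r)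
    (hmin : ∀ (z : K) (s : ℝ), {x : K | BoundedOrbit f x} ⊆ Metric.closedBall z s → r ≤ s)
    (x₀ : K) (hx₀ : BoundedOrbit f x₀) :
    {x : K | BoundedOrbit f x} ⊆
      ⋃ x ∈ {x : K | f.eval (f.eval x) = x₀}, Metric.closedBall x (r ^ (-(1 : ℝ) / d)) :=
  filledJulia_subset_small_balls_general f d hd hmonic hdeg r hr z₀ hcover hmin x₀ hx₀
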